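/- arXiv:2510.04521 — 3 statements merged into one kernel-verified Lean document; each statement's English description precedes it below -/
import Mathlib

section
/- Let C_•, D_• be chain complexes of finite-dimensional F_2-vector spaces with a chain map γ_• : D_• → C_•, ∂^D_1 surjective, and E_• the total complex with E_1 = D_1 ⊕ C_2, E_0 = D_0 ⊕ C_1. Suppose (c, d) ∈ C^1 ⊕ D^0 (identified with C_1 ⊕ D_0) is a representative of a nontrivial class of the first cohomology H^1(E_•) (with respect to the transposed boundary maps). Then c ≠ 0, c is a cocycle of C_• not a coboundary (i.e., c represents a nontrivial class of H^1(C_•)), and consequently ‖(c,d)‖ ≥ ‖c‖ ≥ d_Z(C), where d_Z(C) = Syst^1(C^•) is the minimal Hamming weight of a nontrivial 1-cocycle of C. Hence d_Z(tot E) ≥ d_Z(C). -/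
open Matrix

/-- `Z`-distance of the merged code: any representative `(d, c) ∈ D⁰ ⊕ C¹` of a
nontrivial class of `H¹(tot E)` has `c ≠ 0`, `c` a nontrivial cocycle of `C_•`, and
`‖(d,c)‖ ≥ ‖c‖ ≥ d_Z(C)`; hence `d_Z(tot E) ≥ d_Z(C)`. -/
theorem stmt6 (d2 d1 d0 c2 c1 c0 : ℕ)
    (dD2 : Matrix (Fin d1) (Fin d2) (ZMod 2)) (dD1 : Matrix (Fin d0) (Fin d1) (ZMod 2))
    (dC2 : Matrix (Fin c1) (Fin c2) (ZMod 2)) (dC1 : Matrix (Fin c0) (Fin c1) (ZMod 2))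
    (γ2 : Matrix (Fin c2) (Fin d2) (ZMod 2)) (γ1 : Matrix (Fin c1) (Fin d1) (ZMod 2))
    (γ0 : Matrix (Fin c0) (Fin d0) (ZMod 2))
    (hD : dD1 * dD2 = 0) (hC : dC1 * dC2 = 0)
    (hγ1 : γ1 * dD2 = dC2 * γ2) (hγ0 : γ0 * dD1 = dC1 * γ1)
    (hsurj : Function.Surjective dD1.mulVec)
    -- any cocycle of E of the form (d, 0) is a coboundary
    (hzero : ∀ d : Fin d0 → ZMod 2, dD1.transpose.mulVec d = 0 →
        ∃ v : Fin c0 → ZMod 2, γ0.transpose.mulVec v = d ∧ dC1.transpose.mulVec v = 0) :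
    (∀ (d : Fin d0 → ZMod 2) (c : Fin c1 → ZMod 2),
      -- (d, c) is a 1-cocycle of tot E
      dD1.transpose.mulVec d + γ1.transpose.mulVec c = 0 →
      dC2.transpose.mulVec c = 0 →
      -- (d, c) is not a coboundary
      (¬∃ v : Fin c0 → ZMod 2,
          γ0.transpose.mulVec v = d ∧ dC1.transpose.mulVec v = c) →
      (c ≠ 0 ∧
        (¬∃ v : Fin c0 → ZMod 2, dC1.transpose.mulVec v = c) ∧
        sInf ((fun w => (hammingNorm w : ℕ∞)) ''
            {w : Fin c1 → ZMod 2 | dC2.transpose.mulVec w = 0 ∧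
              ¬∃ v : Fin c0 → ZMod 2, dC1.transpose.mulVec v = w}) ≤
          (hammingNorm c : ℕ∞) ∧
        hammingNorm c ≤ hammingNorm d + hammingNorm c)) ∧
    -- hence d_Z(tot E) ≥ d_Z(C)
    sInf ((fun w => (hammingNorm w : ℕ∞)) ''
        {w : Fin c1 → ZMod 2 | dC2.transpose.mulVec w = 0 ∧
          ¬∃ v : Fin c0 → ZMod 2, dC1.transpose.mulVec v = w}) ≤
      sInf ((fun p => ((hammingNorm p.1 + hammingNorm p.2 : ℕ) : ℕ∞)) ''
        {p : (Fin d0 → ZMod 2) × (Fin c1 → ZMod 2) |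
          dD1.transpose.mulVec p.1 + γ1.transpose.mulVec p.2 = 0 ∧
          dC2.transpose.mulVec p.2 = 0 ∧
          ¬∃ v : Fin c0 → ZMod 2,
            γ0.transpose.mulVec v = p.1 ∧ dC1.transpose.mulVec v = p.2}) := by

  have char2 : ∀ {n : ℕ} (x : Fin n → ZMod 2), x + x = 0 := by
    intro n x; funext i; exact CharTwo.add_self_eq_zero _
  have main : ∀ (d : Fin d0 → ZMod 2) (c : Fin c1 → ZMod 2),
      dD1.transpose.mulVec d + γ1.transpose.mulVec c = 0 →
      dC2.transpose.mulVec c = 0 →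
      (¬∃ v : Fin c0 → ZMod 2,
          γ0.transpose.mulVec v = d ∧ dC1.transpose.mulVec v = c) →
      ¬∃ v : Fin c0 → ZMod 2, dC1.transpose.mulVec v = c := by
    intro d c h1 h2 h3 ⟨v, hv⟩
    have comm : dD1.transpose.mulVec (γ0.transpose.mulVec v)
        = γ1.transpose.mulVec c := by
      rw [Matrix.mulVec_mulVec, ← Matrix.transpose_mul, hγ0,
        Matrix.transpose_mul, ← Matrix.mulVec_mulVec, hv]
    have key : dD1.transpose.mulVec (d + γ0.transpose.mulVec v) = 0 := by
      rw [Matrix.mulVec_add, comm, h1]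
    obtain ⟨w, hw1, hw2⟩ := hzero _ key
    apply h3
    refine ⟨w + v, ?_, ?_⟩
    · rw [Matrix.mulVec_add, hw1, add_assoc, char2, add_zero]
    · rw [Matrix.mulVec_add, hw2, zero_add, hv]
  constructor
  · intro d c h1 h2 h3
    have hnc := main d c h1 h2 h3
    have hc0 : c ≠ 0 := by
      rintro rfl
      exact hnc ⟨0, by simp⟩
    refine ⟨hc0, hnc, ?_, Nat.le_add_left _ _⟩
    exact sInf_le (Set.mem_image_of_mem _ ⟨h2, hnc⟩)
  · apply le_sInf
    rintro b ⟨p, ⟨hp1, hp2, hp3⟩, rfl⟩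
    have hnc := main p.1 p.2 hp1 hp2 hp3
    calc sInf ((fun w => (hammingNorm w : ℕ∞)) ''
        {w : Fin c1 → ZMod 2 | dC2.transpose.mulVec w = 0 ∧
          ¬∃ v : Fin c0 → ZMod 2, dC1.transpose.mulVec v = w})
        ≤ (hammingNorm p.2 : ℕ∞) := sInf_le (Set.mem_image_of_mem _ ⟨hp2, hnc⟩)
      _ ≤ ((hammingNorm p.1 + hammingNorm p.2 : ℕ) : ℕ∞) := by
          exact_mod_cast Nat.le_add_left _ _
end

section
/- Let C_•, D_• be chain complexes of finite-dimensional F_2-vector spaces and γ_• : D_• → C_• a chain map. Suppose: (i) the linear maps ∂^D_1, ∂^C_2, γ_1 and their transposes are ω-bounded (each basis vector maps to a vector of Hamming weight at most ω, so ‖M x‖ ≤ ω ‖x‖ for all x); (ii) ε-systolic expansion holds: for every u ∈ D_1 \ ker ∂^D_1, ‖∂^D_1 u‖ ≥ ε · min_{z ∈ ker ∂^D_1} ‖u + z‖, with ε ≥ ω. Let L' ⊆ C_1 ⊕ D_0 be the set of representatives, embedded via c ↦ (0,c), of a fixed basis of H_1(C)/γ_*(H_1(D)) lifted to 1-cycles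 of C. Then for every w ∈ (L' \ {0}) + im ∂^C_2 and every u ∈ D_1, ‖w + (γ_1 + ∂^D_1) u‖ ≥ d_X(C), where d_X(C) = Syst_1(C_•) is the minimal weight of a 1-cycle of C that is not a boundary and (γ_1 + ∂^D_1)u denotes (∂^D_1 u, γ_1 u) ∈ D_0 ⊕ C_1. In particular d_X(tot E) ≥ d_X(C). -/
/-!
Given `u ∈ D₁`, choose `z ∈ ker ∂^D₁` minimising `‖u + z‖`. Boundedness of `γ₁` and systolic
expansion with `ω ≤ ε` give `‖γ₁ (u + z)‖ ≤ ω ‖u + z‖ ≤ ε ‖u + z‖ ≤ ‖∂^D₁ u‖`. Subtracting `γ₁ (u + z)`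
from `w + γ₁ u` yields the cycle `w - γ₁ z`, which is not a boundary of `C` because the class of a
nonzero element of `L'` avoids `γ_*(H₁(D))`. Hence `d_X(C) ≤ ‖w - γ₁ z‖ ≤ ‖w + γ₁ u‖ + ‖∂^D₁ u‖`.
Over `𝔽₂`, surjectivity of `∂^D₁` and the spanning property of `L'` bring every cycle of the total
complex into the form `(∂^D₁ u, w + γ₁ u)`, and it is a boundary when the `L'`-component of `w`
vanishes.
-/

open Matrix

theorem hammingNorm_sub_le {ι : Type*} [Fintype ι] {β : ι → Type*} [∀ i, AddGroup (β i)]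
    [∀ i, DecidableEq (β i)] (x y : ∀ i, β i) :
    hammingNorm (x - y) ≤ hammingNorm x + hammingNorm y := by
  have h := hammingDist_triangle x 0 y
  rw [hammingDist_zero_right, hammingDist_zero_left] at h
  convert h using 1
  simp only [hammingNorm, hammingDist, Pi.sub_apply, sub_ne_zero]

section Systole

variable {R c₀ c₁ c₂ d₀ d₁ : Type*} [Ring R] [DecidableEq R]
  [Fintype c₁] [Fintype c₂] [Fintype d₀] [Fintype d₁]

/-- `Syst₁(C)`, the `X`-distance of the complex `C₂ → C₁ → C₀`; it is `⊤` when `H₁(C) = 0`. -/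
noncomputable def systole (dC1 : Matrix c₀ c₁ R) (dC2 : Matrix c₁ c₂ R) : ℕ∞ :=
  sInf ((fun v => (hammingNorm v : ℕ∞)) ''
    {v : c₁ → R | dC1 *ᵥ v = 0 ∧ ¬∃ x : c₂ → R, dC2 *ᵥ x = v})

theorem systole_le_hammingNorm {dC1 : Matrix c₀ c₁ R} {dC2 : Matrix c₁ c₂ R} {v : c₁ → R}
    (hcyc : dC1 *ᵥ v = 0) (hnb : ¬∃ x, dC2 *ᵥ x = v) :
    systole dC1 dC2 ≤ hammingNorm v :=
  sInf_le ⟨v, ⟨hcyc, hnb⟩, rfl⟩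

theorem exists_mulVec_eq_zero_hammingNorm_mulVec_add_le {ε ω : ℝ}
    (dD1 : Matrix d₀ d₁ R) (γ1 : Matrix c₁ d₁ R)
    (hbγ1 : ∀ x, (hammingNorm (γ1 *ᵥ x) : ℝ) ≤ ω * hammingNorm x)
    (hexp : ∀ u : d₁ → R, dD1 *ᵥ u ≠ 0 →
        ε * ((sInf {k : ℕ | ∃ z, dD1 *ᵥ z = 0 ∧ hammingNorm (u + z) = k} : ℕ) : ℝ) ≤
          (hammingNorm (dD1 *ᵥ u) : ℝ))
    (hεω : ω ≤ ε) (u : d₁ → R) :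
    ∃ z, dD1 *ᵥ z = 0 ∧ hammingNorm (γ1 *ᵥ (u + z)) ≤ hammingNorm (dD1 *ᵥ u) := by
  by_cases hu : dD1 *ᵥ u = 0
  · exact ⟨-u, by rw [mulVec_neg, hu, neg_zero], by simp⟩
  obtain ⟨z, hz, hmin⟩ := Nat.sInf_mem (s := {k : ℕ | ∃ z, dD1 *ᵥ z = 0 ∧
    hammingNorm (u + z) = k}) ⟨_, 0, mulVec_zero dD1, rfl⟩
  refine ⟨z, hz, ?_⟩
  have hz_le : (hammingNorm (γ1 *ᵥ (u + z)) : ℝ) ≤ hammingNorm (dD1 *ᵥ u) :=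
    calc (hammingNorm (γ1 *ᵥ (u + z)) : ℝ)
        ≤ ω * hammingNorm (u + z) := hbγ1 (u + z)
      _ ≤ ε * hammingNorm (u + z) := by gcongr
      _ ≤ hammingNorm (dD1 *ᵥ u) := by rw [hmin]; exact hexp u hu
  exact_mod_cast hz_le

theorem systole_le_hammingNorm_mulVec_add_hammingNorm {ε ω : ℝ}
    {dD1 : Matrix d₀ d₁ R} {dC2 : Matrix c₁ c₂ R} {dC1 : Matrix c₀ c₁ R}
    {γ1 : Matrix c₁ d₁ R} {γ0 : Matrix c₀ d₀ R}
    (hC : dC1 * dC2 = 0) (hγ0 : γ0 * dD1 = dC1 * γ1)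
    (hbγ1 : ∀ x, (hammingNorm (γ1 *ᵥ x) : ℝ) ≤ ω * hammingNorm x)
    (hexp : ∀ u : d₁ → R, dD1 *ᵥ u ≠ 0 →
        ε * ((sInf {k : ℕ | ∃ z, dD1 *ᵥ z = 0 ∧ hammingNorm (u + z) = k} : ℕ) : ℝ) ≤
          (hammingNorm (dD1 *ᵥ u) : ℝ))
    (hεω : ω ≤ ε) {L : c₁ → R} (hLcyc : dC1 *ᵥ L = 0)
    (hLnt : ¬∃ (z : d₁ → R) (b : c₂ → R), dD1 *ᵥ z = 0 ∧ L = γ1 *ᵥ z + dC2 *ᵥ b)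
    (b : c₂ → R) (u : d₁ → R) :
    systole dC1 dC2 ≤
      ((hammingNorm (dD1 *ᵥ u) + hammingNorm ((L + dC2 *ᵥ b) + γ1 *ᵥ u) : ℕ) : ℕ∞) := by
  obtain ⟨z, hz, hγz⟩ := exists_mulVec_eq_zero_hammingNorm_mulVec_add_le dD1 γ1 hbγ1 hexp hεω u
  have hcyc : dC1 *ᵥ (L + dC2 *ᵥ b - γ1 *ᵥ z) = 0 := by
    rw [mulVec_sub, mulVec_add, mulVec_mulVec, mulVec_mulVec, hC, ← hγ0, ← mulVec_mulVec, hz,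
      hLcyc, zero_mulVec, mulVec_zero]
    abel
  have hnb : ¬∃ x, dC2 *ᵥ x = L + dC2 *ᵥ b - γ1 *ᵥ z := by
    rintro ⟨x, hx⟩
    refine hLnt ⟨z, x - b, hz, ?_⟩
    rw [mulVec_sub, hx]
    abel
  have hsplit : L + dC2 *ᵥ b - γ1 *ᵥ z = (L + dC2 *ᵥ b + γ1 *ᵥ u) - γ1 *ᵥ (u + z) := by
    rw [mulVec_add]
    abel
  have hweight := hammingNorm_sub_le (L + dC2 *ᵥ b + γ1 *ᵥ u) (γ1 *ᵥ (u + z))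
  rw [← hsplit] at hweight
  exact (systole_le_hammingNorm hcyc hnb).trans (by exact_mod_cast (by omega))

end Systole

theorem exists_mem_add_mulVec_eq_of_cycle {c₀ c₁ c₂ d₀ d₁ : Type*}
    [Fintype c₁] [Fintype c₂] [Fintype d₀] [Fintype d₁]
    {dD1 : Matrix d₀ d₁ (ZMod 2)} {dC2 : Matrix c₁ c₂ (ZMod 2)} {dC1 : Matrix c₀ c₁ (ZMod 2)}
    {γ1 : Matrix c₁ d₁ (ZMod 2)} {γ0 : Matrix c₀ d₀ (ZMod 2)}
    (hγ0 : γ0 * dD1 = dC1 * γ1) (hsurj : Function.Surjective dD1.mulVec)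
    {S : Set (c₁ → ZMod 2)}
    (hspan : ∀ v : c₁ → ZMod 2, dC1 *ᵥ v = 0 →
        ∃ L ∈ S, ∃ (z : d₁ → ZMod 2) (b : c₂ → ZMod 2),
          dD1 *ᵥ z = 0 ∧ v + L = γ1 *ᵥ z + dC2 *ᵥ b)
    {a : d₀ → ZMod 2} {c : c₁ → ZMod 2} (hcyc : γ0 *ᵥ a + dC1 *ᵥ c = 0) :
    ∃ L ∈ S, ∃ (b : c₂ → ZMod 2) (u : d₁ → ZMod 2),
      dD1 *ᵥ u = a ∧ (L + dC2 *ᵥ b) + γ1 *ᵥ u = c := by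
  obtain ⟨u, rfl⟩ := hsurj a
  have hcyc' : dC1 *ᵥ (c + γ1 *ᵥ u) = 0 := by
    rwa [mulVec_add, mulVec_mulVec, ← hγ0, ← mulVec_mulVec, add_comm]
  obtain ⟨L, hL, z, b, hz, hLz⟩ := hspan _ hcyc'
  refine ⟨L, hL, b, u + z, by rw [mulVec_add, hz, add_zero], ?_⟩
  rw [← sub_eq_zero, ZModModule.sub_eq_add, mulVec_add]
  calc L + dC2 *ᵥ b + (γ1 *ᵥ u + γ1 *ᵥ z) + c
      = (c + γ1 *ᵥ u + L) + (γ1 *ᵥ z + dC2 *ᵥ b) := by abel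
    _ = 0 := by rw [hLz, ZModModule.add_self]

theorem stmt7_general (d1 d0 c2 c1 c0 : ℕ) (ε ω : ℝ)
    (dD1 : Matrix (Fin d0) (Fin d1) (ZMod 2))
    (dC2 : Matrix (Fin c1) (Fin c2) (ZMod 2)) (dC1 : Matrix (Fin c0) (Fin c1) (ZMod 2))
    (γ1 : Matrix (Fin c1) (Fin d1) (ZMod 2)) (γ0 : Matrix (Fin c0) (Fin d0) (ZMod 2))
    (hC : dC1 * dC2 = 0) (hγ0 : γ0 * dD1 = dC1 * γ1)
    (hsurj : Function.Surjective dD1.mulVec)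
    -- ω-boundedness of the maps and their transposes
    (hbγ1 : ∀ x, (hammingNorm (γ1.mulVec x) : ℝ) ≤ ω * hammingNorm x)
    -- ε-systolic expansion of D₁
    (hexp : ∀ u : Fin d1 → ZMod 2, dD1.mulVec u ≠ 0 →
        ε * ((sInf {k : ℕ | ∃ z, dD1.mulVec z = 0 ∧ hammingNorm (u + z) = k} : ℕ) : ℝ) ≤
          (hammingNorm (dD1.mulVec u) : ℝ))
    (hεω : ω ≤ ε)
    -- L' : a lift of a basis of H₁(C)/γ_*(H₁(D)) to 1-cycles of C
    (L' : Submodule (ZMod 2) (Fin c1 → ZMod 2))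
    (hL'cyc : ∀ v ∈ L', dC1.mulVec v = 0)
    (hL'nt : ∀ v ∈ L', v ≠ 0 →
        ¬∃ (z : Fin d1 → ZMod 2) (b : Fin c2 → ZMod 2),
          dD1.mulVec z = 0 ∧ v = γ1.mulVec z + dC2.mulVec b)
    (hL'span : ∀ v : Fin c1 → ZMod 2, dC1.mulVec v = 0 →
        ∃ L ∈ L', ∃ (z : Fin d1 → ZMod 2) (b : Fin c2 → ZMod 2),
          dD1.mulVec z = 0 ∧ v + L = γ1.mulVec z + dC2.mulVec b) :
    -- main inequality
    (∀ (L : Fin c1 → ZMod 2), L ∈ L' → L ≠ 0 →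
      ∀ (b : Fin c2 → ZMod 2) (u : Fin d1 → ZMod 2),
        sInf ((fun v => (hammingNorm v : ℕ∞)) ''
            {v : Fin c1 → ZMod 2 | dC1.mulVec v = 0 ∧
              ¬∃ x : Fin c2 → ZMod 2, dC2.mulVec x = v}) ≤
          ((hammingNorm (dD1.mulVec u) +
            hammingNorm ((L + dC2.mulVec b) + γ1.mulVec u) : ℕ) : ℕ∞)) ∧
    -- in particular d_X(tot E) ≥ d_X(C)
    sInf ((fun v => (hammingNorm v : ℕ∞)) ''
        {v : Fin c1 → ZMod 2 | dC1.mulVec v = 0 ∧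
          ¬∃ x : Fin c2 → ZMod 2, dC2.mulVec x = v}) ≤
      sInf ((fun p => ((hammingNorm p.1 + hammingNorm p.2 : ℕ) : ℕ∞)) ''
        {p : (Fin d0 → ZMod 2) × (Fin c1 → ZMod 2) |
          γ0.mulVec p.1 + dC1.mulVec p.2 = 0 ∧
          ¬∃ (u : Fin d1 → ZMod 2) (b : Fin c2 → ZMod 2),
            p.1 = dD1.mulVec u ∧ p.2 = γ1.mulVec u + dC2.mulVec b}) := by
  have key : ∀ L ∈ L', L ≠ 0 → ∀ b u, systole dC1 dC2 ≤
      ((hammingNorm (dD1 *ᵥ u) + hammingNorm ((L + dC2 *ᵥ b) + γ1 *ᵥ u) : ℕ) : ℕ∞) :=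
    fun L hL hL0 =>
      systole_le_hammingNorm_mulVec_add_hammingNorm hC hγ0 hbγ1 hexp hεω (hL'cyc L hL)
        (hL'nt L hL hL0)
  refine ⟨key, le_sInf ?_⟩
  rintro _ ⟨⟨a, c⟩, ⟨hcyc, hnb⟩, rfl⟩
  obtain ⟨L, hL, b, u, rfl, rfl⟩ := exists_mem_add_mulVec_eq_of_cycle hγ0 hsurj hL'span hcyc
  have hL0 : L ≠ 0 := by
    rintro rfl
    exact hnb ⟨u, b, rfl, by rw [zero_add, add_comm]⟩
  exact key L hL hL0 b u

/-- Distance preservation for fast surgery with `ε ≥ ω`: if `∂^D₁, ∂^C₂, ∂^C₁, γ₁`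
and their transposes are `ω`-bounded and `D₁` is `ε`-systolic expanding with `ε ≥ ω`,
then for every `w ∈ (L' \ {0}) + im ∂^C₂` (where `L'` is a lift of a basis of
`H₁(C)/γ_*(H₁(D))` to 1-cycles of `C`) and every `u ∈ D₁`,
`‖(∂^D₁ u, w + γ₁ u)‖ ≥ d_X(C)`; in particular `d_X(tot E) ≥ d_X(C)`. -/
theorem stmt7 (d1 d0 c2 c1 c0 : ℕ) (ε ω : ℝ)
    (dD1 : Matrix (Fin d0) (Fin d1) (ZMod 2))
    (dC2 : Matrix (Fin c1) (Fin c2) (ZMod 2)) (dC1 : Matrix (Fin c0) (Fin c1) (ZMod 2))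
    (γ1 : Matrix (Fin c1) (Fin d1) (ZMod 2)) (γ0 : Matrix (Fin c0) (Fin d0) (ZMod 2))
    (hC : dC1 * dC2 = 0) (hγ0 : γ0 * dD1 = dC1 * γ1)
    (hsurj : Function.Surjective dD1.mulVec)
    -- ω-boundedness of the maps and their transposes
    (hbD1 : ∀ x, (hammingNorm (dD1.mulVec x) : ℝ) ≤ ω * hammingNorm x)
    (hbD1t : ∀ x, (hammingNorm (dD1.transpose.mulVec x) : ℝ) ≤ ω * hammingNorm x)
    (hbC2 : ∀ x, (hammingNorm (dC2.mulVec x) : ℝ) ≤ ω * hammingNorm x)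
    (hbC2t : ∀ x, (hammingNorm (dC2.transpose.mulVec x) : ℝ) ≤ ω * hammingNorm x)
    (hbC1 : ∀ x, (hammingNorm (dC1.mulVec x) : ℝ) ≤ ω * hammingNorm x)
    (hbC1t : ∀ x, (hammingNorm (dC1.transpose.mulVec x) : ℝ) ≤ ω * hammingNorm x)
    (hbγ1 : ∀ x, (hammingNorm (γ1.mulVec x) : ℝ) ≤ ω * hammingNorm x)
    (hbγ1t : ∀ x, (hammingNorm (γ1.transpose.mulVec x) : ℝ) ≤ ω * hammingNorm x)
    -- ε-systolic expansion of D₁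
    (hexp : ∀ u : Fin d1 → ZMod 2, dD1.mulVec u ≠ 0 →
        ε * ((sInf {k : ℕ | ∃ z, dD1.mulVec z = 0 ∧ hammingNorm (u + z) = k} : ℕ) : ℝ) ≤
          (hammingNorm (dD1.mulVec u) : ℝ))
    (hε : 0 < ε) (hεω : ω ≤ ε)
    -- L' : a lift of a basis of H₁(C)/γ_*(H₁(D)) to 1-cycles of C
    (L' : Submodule (ZMod 2) (Fin c1 → ZMod 2))
    (hL'cyc : ∀ v ∈ L', dC1.mulVec v = 0)
    (hL'nt : ∀ v ∈ L', v ≠ 0 →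
        ¬∃ (z : Fin d1 → ZMod 2) (b : Fin c2 → ZMod 2),
          dD1.mulVec z = 0 ∧ v = γ1.mulVec z + dC2.mulVec b)
    (hL'span : ∀ v : Fin c1 → ZMod 2, dC1.mulVec v = 0 →
        ∃ L ∈ L', ∃ (z : Fin d1 → ZMod 2) (b : Fin c2 → ZMod 2),
          dD1.mulVec z = 0 ∧ v + L = γ1.mulVec z + dC2.mulVec b) :
    -- main inequality
    (∀ (L : Fin c1 → ZMod 2), L ∈ L' → L ≠ 0 →
      ∀ (b : Fin c2 → ZMod 2) (u : Fin d1 → ZMod 2),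
        sInf ((fun v => (hammingNorm v : ℕ∞)) ''
            {v : Fin c1 → ZMod 2 | dC1.mulVec v = 0 ∧
              ¬∃ x : Fin c2 → ZMod 2, dC2.mulVec x = v}) ≤
          ((hammingNorm (dD1.mulVec u) +
            hammingNorm ((L + dC2.mulVec b) + γ1.mulVec u) : ℕ) : ℕ∞)) ∧
    -- in particular d_X(tot E) ≥ d_X(C)
    sInf ((fun v => (hammingNorm v : ℕ∞)) ''
        {v : Fin c1 → ZMod 2 | dC1.mulVec v = 0 ∧
          ¬∃ x : Fin c2 → ZMod 2, dC2.mulVec x = v}) ≤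
      sInf ((fun p => ((hammingNorm p.1 + hammingNorm p.2 : ℕ) : ℕ∞)) ''
        {p : (Fin d0 → ZMod 2) × (Fin c1 → ZMod 2) |
          γ0.mulVec p.1 + dC1.mulVec p.2 = 0 ∧
          ¬∃ (u : Fin d1 → ZMod 2) (b : Fin c2 → ZMod 2),
            p.1 = dD1.mulVec u ∧ p.2 = γ1.mulVec u + dC2.mulVec b}) :=
  stmt7_general d1 d0 c2 c1 c0 ε ω dD1 dC2 dC1 γ1 γ0 hC hγ0 hsurj hbγ1 hexp hεω L' hL'cyc hL'nt
    hL'span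
end

section
/- Let l ≥ 1 and let D_1 be a finite-dimensional F_2-vector space with linear maps ∂^D_1 : D_1 → D_0 and γ_1 : D_1 → C_1 with γ_1 ω-bounded. Consider u'' = Σ_{j=1}^l d_j ⊗ e_j ∈ D_1 ⊗ F_2^l and the product boundary ∂ u'' = Σ_j (∂^D_1 d_j) ⊗ e_j ⊕ Σ_j d_j ⊗ ∂^R_1 e_j where ∂^R_1 is the length-l repetition code boundary. Fix j_⋆ ∈ {1,…,l} and set Δ = max_j ‖d_{j_⋆} − d_j‖ (Hamming weight of the symmetric difference, i.e., of d_{j_⋆}+d_j over F_2). Then: (a) if Δ < ‖d_{j_⋆}‖ and ‖d_{j_⋆}‖ > 0, then ‖∂ u''‖ ≥ l; (b) if Δ ≥ ‖d_{j_⋆}‖, then ‖∂ u''‖ ≥ Σ_{j=1}^{l−1} ‖d_j + d_{j+1}‖ ≥ Δ ≥ ‖d_{j_⋆}‖. In either case ‖∂ u''‖ ≥ min(‖γ_1(d_{j_⋆})‖/ω, l). -/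
/-!
The repetition-code part `Σ_{j<l} ‖d_j + d_{j+1}‖` of `‖∂u''‖` telescopes: by the triangle
inequality for the Hamming distance it dominates every `‖d_{j⋆} + d_j‖`, hence `Δ`.
If `Δ < ‖d_{j⋆}‖`, no `d_j` can vanish (else `‖d_{j⋆} + d_j‖ = ‖d_{j⋆}‖`), so each of the `l`
terms `∂^D₁ d_j` has weight at least one. Otherwise `‖γ₁ d_{j⋆}‖ / ω ≤ ‖d_{j⋆}‖ ≤ Δ`.
-/

open Matrix Finset

section Hamming

variable {ι : Type*} [Fintype ι] {β : ι → Type*} [∀ i, DecidableEq (β i)]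

theorem hammingDist_le_sum_Ico (f : ℕ → ∀ i, β i) {a b : ℕ} (hab : a ≤ b) :
    hammingDist (f a) (f b) ≤ ∑ k ∈ Ico a b, hammingDist (f k) (f (k + 1)) := by
  induction b, hab using Nat.le_induction with
  | base => simp
  | succ b hab ih =>
    rw [sum_Ico_succ_top hab]
    exact (hammingDist_triangle _ (f b) _).trans (Nat.add_le_add_right ih _)

theorem hammingDist_le_sum_hammingDist_succ {m : ℕ} (f : Fin (m + 1) → ∀ i, β i)
    (i j : Fin (m + 1)) :
    hammingDist (f i) (f j) ≤ ∑ k : Fin m, hammingDist (f k.castSucc) (f k.succ) := by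
  wlog hij : i ≤ j generalizing i j
  · rw [hammingDist_comm]
    exact this j i (le_of_not_ge hij)
  set g : ℕ → ∀ i, β i := fun k => f (Fin.clamp k m)
  have hg (k : Fin (m + 1)) : g k = f k := by
    simp only [g]
    congr
    ext
    simp [Fin.coe_clamp, Nat.le_of_lt_succ k.isLt]
  have hsum : ∑ k : Fin m, hammingDist (f k.castSucc) (f k.succ) =
      ∑ k ∈ range m, hammingDist (g k) (g (k + 1)) := by
    rw [← Fin.sum_univ_eq_sum_range (fun k => hammingDist (g k) (g (k + 1)))]
    refine sum_congr rfl fun k _ => ?_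
    rw [← hg k.castSucc, ← hg k.succ, Fin.val_castSucc, Fin.val_succ]
  rw [hsum, ← hg i, ← hg j]
  refine (hammingDist_le_sum_Ico g hij).trans (sum_le_sum_of_subset fun k hk => ?_)
  simp only [mem_Ico, mem_range] at hk ⊢
  omega

theorem hammingNorm_add_eq_hammingDist [∀ i, AddCommGroup (β i)] [∀ i, Module (ZMod 2) (β i)]
    (x y : ∀ i, β i) : hammingNorm (x + y) = hammingDist x y := by
  rw [hammingDist_eq_hammingNorm, ZModModule.neg_eq_self]

end Hamming

section RepetitionBoundary

variable {ι : Type*} [Fintype ι] {M : Type*} [AddCommGroup M] [Module (ZMod 2) M]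
  [DecidableEq M]

theorem hammingNorm_add_le_sum_succ {m : ℕ} (d : Fin (m + 1) → ι → M) (i j : Fin (m + 1)) :
    hammingNorm (d i + d j) ≤ ∑ k : Fin m, hammingNorm (d k.castSucc + d k.succ) := by
  simp only [hammingNorm_add_eq_hammingDist]
  exact hammingDist_le_sum_hammingDist_succ d i j

theorem sup_hammingNorm_add_le_sum_succ {m : ℕ} (d : Fin (m + 1) → ι → M) (i : Fin (m + 1)) :
    univ.sup (fun j => hammingNorm (d i + d j)) ≤
      ∑ k : Fin m, hammingNorm (d k.castSucc + d k.succ) :=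
  Finset.sup_le fun j _ => hammingNorm_add_le_sum_succ d i j

end RepetitionBoundary

theorem ne_zero_of_sup_hammingNorm_add_lt {ι J : Type*} [Fintype ι] [Fintype J]
    {β : ι → Type*} [∀ i, DecidableEq (β i)] [∀ i, AddZeroClass (β i)]
    (d : J → ∀ i, β i) {i : J}
    (hlt : univ.sup (fun j => hammingNorm (d i + d j)) < hammingNorm (d i)) (j : J) :
    d j ≠ 0 := by
  intro hj
  have := le_sup (f := fun j => hammingNorm (d i + d j)) (mem_univ j)
  simp only [hj, add_zero] at this
  omega

/-- Expansion boosting via the repetition code: for `u'' = Σ_j d_j ⊗ e_j` with product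
boundary `∂u'' = Σ_j (∂^D₁ d_j) ⊗ e_j ⊕ Σ_j d_j ⊗ ∂^R₁ e_j` (of Hamming weight
`Σ_j ‖∂^D₁ d_j‖ + Σ_{j<l} ‖d_j + d_{j+1}‖`, `l = m+1`), distinguished index `j⋆` and
`Δ = max_j ‖d_{j⋆} + d_j‖`:
(a) if `Δ < ‖d_{j⋆}‖` and `‖d_{j⋆}‖ > 0` then `‖∂u''‖ ≥ l`;
(b) if `Δ ≥ ‖d_{j⋆}‖` then `‖∂u''‖ ≥ Σ_j ‖d_j + d_{j+1}‖ ≥ Δ ≥ ‖d_{j⋆}‖`;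
in either case `‖∂u''‖ ≥ min(‖γ₁ d_{j⋆}‖/ω, l)`. -/
theorem stmt11 (m n1 n0 c1 : ℕ) (ω : ℝ) (hω : 0 < ω)
    (dD1 : Matrix (Fin n0) (Fin n1) (ZMod 2))
    (γ1 : Matrix (Fin c1) (Fin n1) (ZMod 2))
    (hbγ1 : ∀ x, (hammingNorm (γ1.mulVec x) : ℝ) ≤ ω * hammingNorm x)
    (d : Fin (m + 1) → Fin n1 → ZMod 2) (jstar : Fin (m + 1))
    -- after cleaning by cycles: no nonzero d_j lies in ker ∂^D₁ in case (a)
    (hclean : (univ.sup (fun j => hammingNorm (d jstar + d j)) <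
          hammingNorm (d jstar)) →
        ∀ j, d j ≠ 0 → 1 ≤ hammingNorm (dD1.mulVec (d j))) :
    -- (a)
    ((univ.sup (fun j => hammingNorm (d jstar + d j)) < hammingNorm (d jstar) ∧
        0 < hammingNorm (d jstar)) →
      m + 1 ≤ ∑ j, hammingNorm (dD1.mulVec (d j)) +
        ∑ k : Fin m, hammingNorm (d k.castSucc + d k.succ)) ∧
    -- (b)
    ((hammingNorm (d jstar) ≤ univ.sup (fun j => hammingNorm (d jstar + d j))) →
      (∑ k : Fin m, hammingNorm (d k.castSucc + d k.succ) ≤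
          ∑ j, hammingNorm (dD1.mulVec (d j)) +
            ∑ k : Fin m, hammingNorm (d k.castSucc + d k.succ) ∧
        univ.sup (fun j => hammingNorm (d jstar + d j)) ≤
          ∑ k : Fin m, hammingNorm (d k.castSucc + d k.succ) ∧
        hammingNorm (d jstar) ≤
          univ.sup (fun j => hammingNorm (d jstar + d j)))) ∧
    -- in either case
    (min ((hammingNorm (γ1.mulVec (d jstar)) : ℝ) / ω) ((m : ℝ) + 1) ≤
      ((∑ j, hammingNorm (dD1.mulVec (d j)) +
        ∑ k : Fin m, hammingNorm (d k.castSucc + d k.succ) : ℕ) : ℝ)) := by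
  set Δ := univ.sup (fun j => hammingNorm (d jstar + d j))
  set S := ∑ k : Fin m, hammingNorm (d k.castSucc + d k.succ)
  set B := ∑ j, hammingNorm (dD1.mulVec (d j))
  have hΔS : Δ ≤ S := sup_hammingNorm_add_le_sum_succ d jstar
  have caseA (hlt : Δ < hammingNorm (d jstar)) : m + 1 ≤ B + S := by
    have hB : m + 1 ≤ B := by
      simpa using card_nsmul_le_sum univ _ 1 fun j _ =>
        hclean hlt j (ne_zero_of_sup_hammingNorm_add_lt d hlt j)
    omega
  refine ⟨fun h => caseA h.1, fun hge => ⟨Nat.le_add_left S B, hΔS, hge⟩, ?_⟩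
  rcases lt_or_ge Δ (hammingNorm (d jstar)) with hlt | hge
  · exact (min_le_right _ _).trans (by exact_mod_cast caseA hlt)
  · have hγ : (hammingNorm (γ1.mulVec (d jstar)) : ℝ) / ω ≤ hammingNorm (d jstar) :=
      div_le_of_le_mul₀ hω.le (Nat.cast_nonneg _) (by linarith [hbγ1 (d jstar)])
    have hB : hammingNorm (d jstar) ≤ B + S := hge.trans (hΔS.trans le_add_self)
    exact (min_le_left _ _).trans (hγ.trans (by exact_mod_cast hB))
end
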